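/- arXiv:2011.13624 — 5 statements merged into one kernel-verified Lean document; each statement's English description precedes it below -/
import Mathlib

section
/- Let n₁, n₂, p, m be positive integers with n₁ + n₂ = p + m =: n. Let X₁ ∈ ℝ^{n₁×p} and X₂ ∈ ℝ^{n₂×p} be such that the Gram matrix XᵀX of the concatenated matrix X = (X₁ᵀ, X₂ᵀ)ᵀ is invertible. Let A₁ ∈ ℝ^{n₁×m} and A₂ ∈ ℝ^{n₂×m} satisfy A₁ᵀA₁ + A₂ᵀA₂ = I_m and A₁ᵀX₁ + A₂ᵀX₂ = 0. Then X₁ᵀA₁A₁ᵀX₁ = X₂ᵀA₂A₂ᵀX₂ = (X₁ᵀX₁)(XᵀX)⁻¹(X₂ᵀX₂). -/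
/-!
Stack `X = (X₁; X₂)` and `A = (A₁; A₂)`. The hypotheses say that `[A | X]` is a square matrix
with left inverse `(Aᵀ; (XᵀX)⁻¹Xᵀ)`; hence it is also a right inverse, i.e.
`AAᵀ + X(XᵀX)⁻¹Xᵀ = 1`: the projections onto the two complementary column spaces add up to the
identity. Reading off the top-left block gives `A₁A₁ᵀ = 1 - X₁(XᵀX)⁻¹X₁ᵀ`, and sandwiching
between `X₁ᵀ` and `X₁` turns this into `X₁ᵀX₁ (XᵀX)⁻¹ (XᵀX - X₁ᵀX₁) = X₁ᵀX₁ (XᵀX)⁻¹ X₂ᵀX₂`.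
The equality with the `X₂`-expression is just `A₁ᵀX₁ = -A₂ᵀX₂`.
-/

open Matrix

namespace Matrix

theorem transpose_mul_self_eq_of_add_eq_zero {R m n : Type*} [Ring R] [Fintype m]
    {B₁ B₂ : Matrix m n R} (h : B₁ + B₂ = 0) : B₁ᵀ * B₁ = B₂ᵀ * B₂ := by
  rw [eq_neg_of_add_eq_zero_left h, transpose_neg, Matrix.neg_mul, Matrix.mul_neg, neg_neg]

variable {R : Type*} [CommRing R] {n m p : Type*} [Fintype n] [Fintype m] [Fintype p]
  [DecidableEq n] [DecidableEq m] [DecidableEq p]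

theorem mul_transpose_add_mul_inv_mul_transpose_eq_one (e : n ≃ m ⊕ p)
    {A : Matrix n m R} {X : Matrix n p R}
    (hA : Aᵀ * A = 1) (hAX : Aᵀ * X = 0) (hX : IsUnit (Xᵀ * X)) :
    A * Aᵀ + X * (Xᵀ * X)⁻¹ * Xᵀ = 1 := by
  have hXA : Xᵀ * A = 0 := by
    rw [← transpose_transpose (Xᵀ * A), transpose_mul, transpose_transpose, hAX, transpose_zero]
  rw [Matrix.mul_assoc X, ← fromCols_mul_fromRows, fromCols_mul_fromRows_eq_one_comm e,
    fromRows_mul_fromCols, hA, hAX, Matrix.mul_assoc, hXA, Matrix.mul_zero, Matrix.mul_assoc,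
    nonsing_inv_mul _ ((isUnit_iff_isUnit_det _).mp hX), fromBlocks_one]

theorem mul_transpose_add_mul_inv_mul_transpose_eq_one_of_fromRows {n₁ n₂ : Type*}
    [Fintype n₁] [Fintype n₂] [DecidableEq n₁] [DecidableEq n₂] (e : n₁ ⊕ n₂ ≃ m ⊕ p)
    {A₁ : Matrix n₁ m R} {A₂ : Matrix n₂ m R} {X₁ : Matrix n₁ p R} {X₂ : Matrix n₂ p R}
    (hA : A₁ᵀ * A₁ + A₂ᵀ * A₂ = 1) (hAX : A₁ᵀ * X₁ + A₂ᵀ * X₂ = 0)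
    (hX : IsUnit (X₁ᵀ * X₁ + X₂ᵀ * X₂)) :
    A₁ * A₁ᵀ + X₁ * (X₁ᵀ * X₁ + X₂ᵀ * X₂)⁻¹ * X₁ᵀ = 1 := by
  have h := mul_transpose_add_mul_inv_mul_transpose_eq_one e (A := fromRows A₁ A₂)
    (X := fromRows X₁ X₂)
    (by rwa [transpose_fromRows, fromCols_mul_fromRows])
    (by rwa [transpose_fromRows, fromCols_mul_fromRows])
    (by rwa [transpose_fromRows, fromCols_mul_fromRows])
  rw [transpose_fromRows, transpose_fromRows, fromRows_mul_fromCols, fromRows_mul,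
    fromRows_mul_fromCols, fromCols_mul_fromRows, fromBlocks_add, ← fromBlocks_one,
    fromBlocks_inj] at h
  exact h.1

end Matrix

theorem stmt_0_general {n₁ n₂ p m : ℕ}
    (hdim : n₁ + n₂ = p + m)
    (X₁ : Matrix (Fin n₁) (Fin p) ℝ) (X₂ : Matrix (Fin n₂) (Fin p) ℝ)
    (A₁ : Matrix (Fin n₁) (Fin m) ℝ) (A₂ : Matrix (Fin n₂) (Fin m) ℝ)
    (hGram : IsUnit (X₁ᵀ * X₁ + X₂ᵀ * X₂))
    (hA : A₁ᵀ * A₁ + A₂ᵀ * A₂ = 1)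
    (hAX : A₁ᵀ * X₁ + A₂ᵀ * X₂ = 0) :
    X₁ᵀ * A₁ * A₁ᵀ * X₁ = X₂ᵀ * A₂ * A₂ᵀ * X₂ ∧
    X₁ᵀ * A₁ * A₁ᵀ * X₁ = (X₁ᵀ * X₁) * (X₁ᵀ * X₁ + X₂ᵀ * X₂)⁻¹ * (X₂ᵀ * X₂) := by
  set G := X₁ᵀ * X₁ + X₂ᵀ * X₂
  have e : Fin n₁ ⊕ Fin n₂ ≃ Fin m ⊕ Fin p :=
    Fintype.equivOfCardEq (by simp [hdim, add_comm])
  have hproj := mul_transpose_add_mul_inv_mul_transpose_eq_one_of_fromRows e hA hAX hGram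
  have hGinv : G⁻¹ * G = 1 := nonsing_inv_mul _ ((isUnit_iff_isUnit_det _).mp hGram)
  refine ⟨?_, ?_⟩
  · simpa only [transpose_mul, transpose_transpose, Matrix.mul_assoc]
      using transpose_mul_self_eq_of_add_eq_zero hAX
  · calc X₁ᵀ * A₁ * A₁ᵀ * X₁ = X₁ᵀ * (1 - X₁ * G⁻¹ * X₁ᵀ) * X₁ := by
          rw [← hproj, add_sub_cancel_right, Matrix.mul_assoc X₁ᵀ]
      _ = X₁ᵀ * X₁ * G⁻¹ * (G - X₁ᵀ * X₁) := by
          simp only [Matrix.mul_sub, Matrix.sub_mul, Matrix.mul_one, Matrix.mul_assoc, hGinv]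
      _ = X₁ᵀ * X₁ * G⁻¹ * (X₂ᵀ * X₂) := by rw [add_sub_cancel_left]

/-- complementary sketching Gram matrix identity (Lemma on Gram of W). -/
theorem stmt_0 {n₁ n₂ p m : ℕ} (hn₁ : 0 < n₁) (hn₂ : 0 < n₂) (hp : 0 < p) (hm : 0 < m)
    (hdim : n₁ + n₂ = p + m)
    (X₁ : Matrix (Fin n₁) (Fin p) ℝ) (X₂ : Matrix (Fin n₂) (Fin p) ℝ)
    (A₁ : Matrix (Fin n₁) (Fin m) ℝ) (A₂ : Matrix (Fin n₂) (Fin m) ℝ)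
    (hGram : IsUnit (X₁ᵀ * X₁ + X₂ᵀ * X₂))
    (hA : A₁ᵀ * A₁ + A₂ᵀ * A₂ = 1)
    (hAX : A₁ᵀ * X₁ + A₂ᵀ * X₂ = 0) :
    X₁ᵀ * A₁ * A₁ᵀ * X₁ = X₂ᵀ * A₂ * A₂ᵀ * X₂ ∧
    X₁ᵀ * A₁ * A₁ᵀ * X₁ = (X₁ᵀ * X₁) * (X₁ᵀ * X₁ + X₂ᵀ * X₂)⁻¹ * (X₂ᵀ * X₂) :=
  stmt_0_general hdim X₁ X₂ A₁ A₂ hGram hA hAX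
end

section
/- Let X₁ ∈ ℝ^{n₁×p} and X₂ ∈ ℝ^{n₂×p}, set G₁ := X₁ᵀX₁ and G₂ := X₂ᵀX₂, and assume G₁ + G₂ is invertible. Define L := (G₁ + G₂)⁻¹(G₂ − G₁), X̃₁ := X₁(L + I_p) and X̃₂ := X₂(L − I_p). Then X̃₁ᵀX̃₁ + X̃₂ᵀX̃₂ = 4 G₁(G₁ + G₂)⁻¹G₂. -/
open Matrix

lemma aux {R : Type*} [Ring R] (A B C : R) (h1 : (A+B)*C = 1) (h2 : C*(A+B) = 1) :
    ((B-A)*C + 1) * (A * (C*(B-A) + 1)) + ((B-A)*C - 1) * (B * (C*(B-A) - 1))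
      = A*C*B + A*C*B + A*C*B + A*C*B := by
  have h1' : ∀ x : R, A*(C*x) + B*(C*x) = x := fun x => by
    rw [← add_mul, ← mul_assoc, h1, one_mul]
  have hc : C*A + C*B = 1 := by
    have := h2; rw [mul_add] at this; exact this
  have hAB : A*(C*B) = B - B*(C*B) := eq_sub_of_add_eq (h1' B)
  have hBA : B*(C*A) = B - B*(C*B) := by
    rw [eq_sub_of_add_eq hc, mul_sub, mul_one]
  have hAA : A*(C*A) = A - (B - B*(C*B)) := by
    have h := eq_sub_of_add_eq (h1' A); rw [hBA] at h; exact h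
  simp only [mul_add, add_mul, mul_sub, sub_mul, mul_one, one_mul, mul_assoc,
    hAB, hBA, hAA]
  abel

/-- the tilted design matrices satisfy
`X̃₁ᵀX̃₁ + X̃₂ᵀX̃₂ = 4 G₁(G₁+G₂)⁻¹G₂`. -/
theorem stmt_1 {n₁ n₂ p : ℕ}
    (X₁ : Matrix (Fin n₁) (Fin p) ℝ) (X₂ : Matrix (Fin n₂) (Fin p) ℝ)
    (hG : IsUnit (X₁ᵀ * X₁ + X₂ᵀ * X₂))
    (L : Matrix (Fin p) (Fin p) ℝ)
    (hL : L = (X₁ᵀ * X₁ + X₂ᵀ * X₂)⁻¹ * (X₂ᵀ * X₂ - X₁ᵀ * X₁)) :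
    (X₁ * (L + 1))ᵀ * (X₁ * (L + 1)) + (X₂ * (L - 1))ᵀ * (X₂ * (L - 1)) =
      (4 : ℝ) • ((X₁ᵀ * X₁) * (X₁ᵀ * X₁ + X₂ᵀ * X₂)⁻¹ * (X₂ᵀ * X₂)) := by
  set A := X₁ᵀ * X₁ with hA
  set B := X₂ᵀ * X₂ with hB
  have hdet : IsUnit (A + B).det := (Matrix.isUnit_iff_isUnit_det _).mp hG
  have h1 : (A + B) * (A + B)⁻¹ = 1 := Matrix.mul_nonsing_inv _ hdet
  have h2 : (A + B)⁻¹ * (A + B) = 1 := Matrix.nonsing_inv_mul _ hdet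
  have hAt : Aᵀ = A := by rw [hA, transpose_mul, transpose_transpose]
  have hBt : Bᵀ = B := by rw [hB, transpose_mul, transpose_transpose]
  have hCt : ((A + B)⁻¹)ᵀ = (A + B)⁻¹ := by
    rw [Matrix.transpose_nonsing_inv, transpose_add, hAt, hBt]
  have hLt : Lᵀ = (B - A) * (A + B)⁻¹ := by
    rw [hL, transpose_mul, hCt, transpose_sub, hAt, hBt]
  have e1 : (X₁ * (L + 1))ᵀ * (X₁ * (L + 1)) = (Lᵀ + 1) * (A * (L + 1)) := by
    rw [transpose_mul, transpose_add, transpose_one, Matrix.mul_assoc (Lᵀ + 1), ← Matrix.mul_assoc X₁ᵀ X₁, ← hA]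
  have e2 : (X₂ * (L - 1))ᵀ * (X₂ * (L - 1)) = (Lᵀ - 1) * (B * (L - 1)) := by
    rw [transpose_mul, transpose_sub, transpose_one, Matrix.mul_assoc (Lᵀ - 1), ← Matrix.mul_assoc X₂ᵀ X₂, ← hB]
  rw [e1, e2, hLt, hL, aux A B (A+B)⁻¹ h1 h2]
  have : ∀ x : Matrix (Fin p) (Fin p) ℝ, x + x + x + x = (4:ℝ) • x := by
    intro x; module
  rw [this]
end

section
/- Let M ∈ ℝ^{p×p} be symmetric, let D ∈ ℝ^{p×p} be diagonal with strictly positive diagonal entries, and let k ∈ {1,…,p}. Then ‖DMD − M‖_{k,op} ≤ ‖D − I_p‖_op · ‖M‖_{k,op} · (1 + ‖D‖_op). -/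
open Matrix

/-- The `k`-sparse operator norm of a `p × p` real matrix:
`‖A‖_{k,op} = sup { |vᵀAv| : ‖v‖₂ = 1, ‖v‖₀ ≤ k }`. -/
noncomputable def kSparseOpNorm {p : ℕ} (A : Matrix (Fin p) (Fin p) ℝ) (k : ℕ) : ℝ :=
  sSup {x : ℝ | ∃ v : Fin p → ℝ, (∑ i, v i ^ 2) = 1 ∧
    (Finset.univ.filter fun i => v i ≠ 0).card ≤ k ∧ x = |v ⬝ᵥ A *ᵥ v|}

/-- The (ℓ₂ → ℓ₂) operator norm of a square real matrix. -/
noncomputable def opNorm {p : ℕ} (A : Matrix (Fin p) (Fin p) ℝ) : ℝ :=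
  ‖Matrix.toEuclideanCLM (𝕜 := ℝ) A‖

/-!
Write `K = ‖M‖_{k,op}` and `D = diagonal d`. Since `D` and `M` are symmetric,
`vᵀ(DMD - M)v = ((D - 1)v)ᵀ M ((D + 1)v)`, and for a `k`-sparse `v` both factors are supported on
the support of `v` because `D` is diagonal. By polarization `|aᵀMb| ≤ K‖a‖‖b‖` for vectors `a, b`
with a common support of size at most `k`, and the two factors have norms at most `‖D - 1‖_op` and
`‖D‖_op + 1` when `‖v‖ = 1`.
-/

open WithLp Function

section EuclideanBridge

variable {n : Type*} [Fintype n]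

lemma dotProduct_eq_inner_toLp (x y : n → ℝ) :
    x ⬝ᵥ y = inner ℝ (toLp 2 x) (toLp 2 y) := by
  rw [EuclideanSpace.inner_toLp_toLp, star_trivial, dotProduct_comm]

lemma sum_sq_eq_norm_toLp_sq (x : n → ℝ) : ∑ i, x i ^ 2 = ‖toLp 2 x‖ ^ 2 :=
  (EuclideanSpace.real_norm_sq_eq _).symm

end EuclideanBridge

lemma Matrix.IsSymm.dotProduct_mulVec_comm {n : Type*} [Fintype n] {M : Matrix n n ℝ}
    (hM : M.IsSymm) (x y : n → ℝ) : x ⬝ᵥ M *ᵥ y = y ⬝ᵥ M *ᵥ x := by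
  rw [← dotProduct_transpose_mulVec, hM.eq]

lemma Matrix.IsSymm.four_mul_dotProduct_mulVec {n : Type*} [Fintype n] {M : Matrix n n ℝ}
    (hM : M.IsSymm) (a b : n → ℝ) :
    4 * (a ⬝ᵥ M *ᵥ b) = (a + b) ⬝ᵥ M *ᵥ (a + b) - (a - b) ⬝ᵥ M *ᵥ (a - b) := by
  simp only [mulVec_add, mulVec_sub, dotProduct_add, dotProduct_sub, add_dotProduct,
    sub_dotProduct]
  rw [hM.dotProduct_mulVec_comm b a]
  ring

lemma Matrix.IsSymm.dotProduct_mulVec_conj_sub {n : Type*} [Fintype n] [DecidableEq n]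
    {M D : Matrix n n ℝ} (hM : M.IsSymm) (hD : D.IsSymm) (v : n → ℝ) :
    v ⬝ᵥ (D * M * D - M) *ᵥ v = ((D - 1) *ᵥ v) ⬝ᵥ M *ᵥ ((D + 1) *ᵥ v) := by
  have hDv : ∀ w, v ⬝ᵥ D *ᵥ w = (D *ᵥ v) ⬝ᵥ w := fun w => by
    rw [dotProduct_comm (D *ᵥ v), ← dotProduct_transpose_mulVec, hD.eq]
  rw [sub_mulVec, ← mulVec_mulVec, ← mulVec_mulVec, dotProduct_sub, hDv]
  simp only [sub_mulVec, add_mulVec, one_mulVec, mulVec_add, dotProduct_add, sub_dotProduct]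
  rw [hM.dotProduct_mulVec_comm v (D *ᵥ v)]
  ring

lemma support_diagonal_mulVec_subset {n R : Type*} [Fintype n] [DecidableEq n]
    [NonUnitalNonAssocSemiring R] (d v : n → R) :
    support (diagonal d *ᵥ v) ⊆ support v := fun i hi =>
  right_ne_zero_of_mul (by rwa [mem_support, mulVec_diagonal] at hi)

variable {p k : ℕ}

lemma opNorm_nonneg (A : Matrix (Fin p) (Fin p) ℝ) : 0 ≤ opNorm A :=
  norm_nonneg _

lemma norm_toLp_mulVec_le (A : Matrix (Fin p) (Fin p) ℝ) (x : Fin p → ℝ) :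
    ‖toLp 2 (A *ᵥ x)‖ ≤ opNorm A * ‖toLp 2 x‖ := by
  rw [← toEuclideanCLM_toLp]
  exact (toEuclideanCLM (𝕜 := ℝ) A).le_opNorm _

lemma norm_toLp_add_one_mulVec_le (A : Matrix (Fin p) (Fin p) ℝ) (x : Fin p → ℝ) :
    ‖toLp 2 ((A + 1) *ᵥ x)‖ ≤ (1 + opNorm A) * ‖toLp 2 x‖ :=
  calc ‖toLp 2 ((A + 1) *ᵥ x)‖ = ‖toLp 2 (A *ᵥ x) + toLp 2 x‖ := by
        rw [add_mulVec, one_mulVec, toLp_add]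
    _ ≤ opNorm A * ‖toLp 2 x‖ + ‖toLp 2 x‖ :=
        (norm_add_le _ _).trans (by gcongr; exact norm_toLp_mulVec_le A x)
    _ = (1 + opNorm A) * ‖toLp 2 x‖ := by ring

lemma abs_dotProduct_mulVec_self_le_opNorm (A : Matrix (Fin p) (Fin p) ℝ) (x : Fin p → ℝ) :
    |x ⬝ᵥ A *ᵥ x| ≤ opNorm A * ‖toLp 2 x‖ ^ 2 :=
  calc |x ⬝ᵥ A *ᵥ x| ≤ ‖toLp 2 x‖ * ‖toLp 2 (A *ᵥ x)‖ := by
        rw [dotProduct_eq_inner_toLp]; exact abs_real_inner_le_norm _ _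
    _ ≤ ‖toLp 2 x‖ * (opNorm A * ‖toLp 2 x‖) := by
        gcongr; exact norm_toLp_mulVec_le A x
    _ = opNorm A * ‖toLp 2 x‖ ^ 2 := by ring

lemma kSparseOpNorm_nonneg (A : Matrix (Fin p) (Fin p) ℝ) (k : ℕ) : 0 ≤ kSparseOpNorm A k :=
  Real.sSup_nonneg fun _ ⟨_, _, _, hx⟩ => hx ▸ abs_nonneg _

lemma abs_dotProduct_mulVec_le_kSparseOpNorm_of_sum_sq_eq_one (A : Matrix (Fin p) (Fin p) ℝ)
    {v : Fin p → ℝ} (hv : ∑ i, v i ^ 2 = 1) (hvk : (Finset.univ.filter fun i => v i ≠ 0).card ≤ k) :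
    |v ⬝ᵥ A *ᵥ v| ≤ kSparseOpNorm A k := by
  refine le_csSup ⟨opNorm A, ?_⟩ ⟨v, hv, hvk, rfl⟩
  rintro _ ⟨w, hw, -, rfl⟩
  have h := abs_dotProduct_mulVec_self_le_opNorm A w
  rwa [← sum_sq_eq_norm_toLp_sq, hw, mul_one] at h

lemma card_filter_ne_zero_le {s : Finset (Fin p)} (hs : s.card ≤ k) {v : Fin p → ℝ}
    (hv : support v ⊆ s) : (Finset.univ.filter fun i => v i ≠ 0).card ≤ k :=
  (Finset.card_le_card fun i hi => hv (by simpa using hi)).trans hs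

section Sparse

variable {s : Finset (Fin p)} (hs : s.card ≤ k)
include hs

lemma abs_dotProduct_mulVec_self_le_kSparseOpNorm (A : Matrix (Fin p) (Fin p) ℝ)
    {v : Fin p → ℝ} (hv : support v ⊆ s) :
    |v ⬝ᵥ A *ᵥ v| ≤ kSparseOpNorm A k * ‖toLp 2 v‖ ^ 2 := by
  rcases eq_or_ne v 0 with rfl | hv0
  · simp
  have hnorm : ‖toLp 2 v‖ ≠ 0 := by simpa using hv0
  set c := ‖toLp 2 v‖⁻¹
  have hunit : ∑ i, (c • v) i ^ 2 = 1 := by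
    rw [sum_sq_eq_norm_toLp_sq, toLp_smul, norm_smul, norm_inv, norm_norm,
      inv_mul_cancel₀ hnorm, one_pow]
  have h := abs_dotProduct_mulVec_le_kSparseOpNorm_of_sum_sq_eq_one A hunit
    (card_filter_ne_zero_le hs ((support_const_smul_subset c v).trans hv))
  rw [mulVec_smul, dotProduct_smul, smul_dotProduct, smul_smul, smul_eq_mul, abs_mul,
    abs_of_nonneg (by positivity)] at h
  calc |v ⬝ᵥ A *ᵥ v| = ‖toLp 2 v‖ ^ 2 * (c * c * |v ⬝ᵥ A *ᵥ v|) := by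
        simp only [c]; field_simp
    _ ≤ ‖toLp 2 v‖ ^ 2 * kSparseOpNorm A k := by gcongr
    _ = kSparseOpNorm A k * ‖toLp 2 v‖ ^ 2 := mul_comm _ _

variable {M : Matrix (Fin p) (Fin p) ℝ} (hM : M.IsSymm) {a b : Fin p → ℝ}
  (ha : support a ⊆ s) (hb : support b ⊆ s)
include hM ha hb

lemma two_mul_abs_dotProduct_mulVec_le_kSparseOpNorm :
    2 * |a ⬝ᵥ M *ᵥ b| ≤ kSparseOpNorm M k * (‖toLp 2 a‖ ^ 2 + ‖toLp 2 b‖ ^ 2) := by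
  have hadd := abs_dotProduct_mulVec_self_le_kSparseOpNorm hs M (v := a + b)
    ((support_add a b).trans (Set.union_subset ha hb))
  have hsub := abs_dotProduct_mulVec_self_le_kSparseOpNorm hs M (v := a - b)
    ((support_sub a b).trans (Set.union_subset ha hb))
  have hpar := parallelogram_law_with_norm ℝ (toLp 2 a) (toLp 2 b)
  rw [← toLp_add, ← toLp_sub] at hpar
  have := abs_sub ((a + b) ⬝ᵥ M *ᵥ (a + b)) ((a - b) ⬝ᵥ M *ᵥ (a - b))
  rw [← hM.four_mul_dotProduct_mulVec, abs_mul, abs_of_pos four_pos] at this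
  have hK := congrArg (kSparseOpNorm M k * ·) hpar
  simp only [mul_add] at hK
  linarith

lemma abs_dotProduct_mulVec_le_kSparseOpNorm :
    |a ⬝ᵥ M *ᵥ b| ≤ kSparseOpNorm M k * ‖toLp 2 a‖ * ‖toLp 2 b‖ := by
  rcases eq_or_ne a 0 with rfl | ha0
  · simp
  rcases eq_or_ne b 0 with rfl | hb0
  · simp
  set α := ‖toLp 2 a‖
  set β := ‖toLp 2 b‖
  have hαβ : 0 < α * β := mul_pos (norm_pos_iff.mpr ((toLp_eq_zero 2).not.mpr ha0))
    (norm_pos_iff.mpr ((toLp_eq_zero 2).not.mpr hb0))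
  -- Rescaled to the common norm `α * β`, the mean bound becomes the product bound.
  have h := two_mul_abs_dotProduct_mulVec_le_kSparseOpNorm hs hM (a := β • a) (b := α • b)
    ((support_const_smul_subset β a).trans ha) ((support_const_smul_subset α b).trans hb)
  rw [mulVec_smul, dotProduct_smul, smul_dotProduct, toLp_smul, toLp_smul, norm_smul, norm_smul,
    Real.norm_of_nonneg (norm_nonneg _), Real.norm_of_nonneg (norm_nonneg _), smul_eq_mul,
    smul_eq_mul, abs_mul, abs_mul, abs_of_nonneg (norm_nonneg _),
    abs_of_nonneg (norm_nonneg _)] at h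
  refine le_of_mul_le_mul_left ?_ (mul_pos two_pos hαβ)
  linarith

end Sparse

theorem stmt_4_general {p k : ℕ}
    (M : Matrix (Fin p) (Fin p) ℝ) (hM : M.IsSymm)
    (d : Fin p → ℝ) :
    kSparseOpNorm (Matrix.diagonal d * M * Matrix.diagonal d - M) k ≤
      opNorm (Matrix.diagonal d - 1) * kSparseOpNorm M k *
        (1 + opNorm (Matrix.diagonal d)) := by
  have hK := kSparseOpNorm_nonneg M k
  have hD1 := opNorm_nonneg (diagonal d - 1)
  have hD := opNorm_nonneg (diagonal d)
  refine Real.sSup_le ?_ (by positivity)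
  rintro _ ⟨v, hv, hvk, rfl⟩
  have hv1 : ‖toLp 2 v‖ = 1 := by
    rwa [← pow_eq_one_iff_of_nonneg (norm_nonneg _) two_ne_zero, ← sum_sq_eq_norm_toLp_sq]
  have hsupp : support v ⊆ ↑(Finset.univ.filter fun i => v i ≠ 0) := fun i hi => by simpa using hi
  have hsub : support ((diagonal d - 1) *ᵥ v) ⊆ support v := by
    rw [← diagonal_one, diagonal_sub]; exact support_diagonal_mulVec_subset _ v
  have hadd : support ((diagonal d + 1) *ᵥ v) ⊆ support v := by
    rw [← diagonal_one, diagonal_add]; exact support_diagonal_mulVec_subset _ v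
  have hsub_norm : ‖toLp 2 ((diagonal d - 1) *ᵥ v)‖ ≤ opNorm (diagonal d - 1) := by
    simpa [hv1] using norm_toLp_mulVec_le (diagonal d - 1) v
  have hadd_norm : ‖toLp 2 ((diagonal d + 1) *ᵥ v)‖ ≤ 1 + opNorm (diagonal d) := by
    simpa [hv1] using norm_toLp_add_one_mulVec_le (diagonal d) v
  rw [hM.dotProduct_mulVec_conj_sub (isSymm_diagonal d)]
  calc _ ≤ kSparseOpNorm M k * ‖toLp 2 ((diagonal d - 1) *ᵥ v)‖ *
        ‖toLp 2 ((diagonal d + 1) *ᵥ v)‖ :=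
        abs_dotProduct_mulVec_le_kSparseOpNorm hvk hM (hsub.trans hsupp) (hadd.trans hsupp)
    _ ≤ kSparseOpNorm M k * opNorm (diagonal d - 1) * (1 + opNorm (diagonal d)) := by
        gcongr
    _ = _ := by ring

/-- perturbation bound for symmetric matrices conjugated by a positive
diagonal matrix, in `k`-sparse operator norm. -/
theorem stmt_4 {p k : ℕ} (hk1 : 1 ≤ k) (hkp : k ≤ p)
    (M : Matrix (Fin p) (Fin p) ℝ) (hM : M.IsSymm)
    (d : Fin p → ℝ) (hd : ∀ i, 0 < d i) :
    kSparseOpNorm (Matrix.diagonal d * M * Matrix.diagonal d - M) k ≤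
      opNorm (Matrix.diagonal d - 1) * kSparseOpNorm M k *
        (1 + opNorm (Matrix.diagonal d)) :=
  stmt_4_general M hM d
end

section
/- Let X be a real-valued random variable and let b ≥ c > 0 satisfy 32c ≤ 1. Suppose that P(X ≥ t) ≤ 2 · max{ exp(−t²/(16b²)), exp(−t/(16c)) } for all t > 0. Then E[exp(X)] ≤ 1 + 8√(2π) · b · exp(4b²) + 64c. -/
open MeasureTheory

open Real Set in
lemma aux_I1 {b : ℝ} (hb : 0 < b) :
    Integrable (fun t : ℝ => 2 * Real.exp (-t ^ 2 / (16 * b ^ 2)) * Real.exp t) ∧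
    ∫ t in Ioi (0:ℝ), 2 * Real.exp (-t ^ 2 / (16 * b ^ 2)) * Real.exp t ≤
      8 * Real.sqrt (2 * Real.pi) * b * Real.exp (4 * b ^ 2) := by
  have hr : (0:ℝ) < 1 / (16 * b ^ 2) := by positivity
  have hfun : (fun t : ℝ => 2 * Real.exp (-t ^ 2 / (16 * b ^ 2)) * Real.exp t)
      = fun t : ℝ => (2 * Real.exp (4 * b ^ 2)) *
          Real.exp (-(1 / (16 * b ^ 2)) * (t - 8 * b ^ 2) ^ 2) := by
    funext t
    rw [mul_assoc, ← Real.exp_add, mul_assoc, ← Real.exp_add]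
    congr 1
    have hb' : (16 : ℝ) * b ^ 2 ≠ 0 := by positivity
    field_simp
    ring
  have hint : Integrable (fun t : ℝ => 2 * Real.exp (-t ^ 2 / (16 * b ^ 2)) * Real.exp t) := by
    rw [hfun]
    exact ((integrable_exp_neg_mul_sq hr).comp_sub_right (8 * b ^ 2)).const_mul _
  refine ⟨hint, ?_⟩
  have h1 : ∫ t in Ioi (0:ℝ), 2 * Real.exp (-t ^ 2 / (16 * b ^ 2)) * Real.exp t
      ≤ ∫ t : ℝ, 2 * Real.exp (-t ^ 2 / (16 * b ^ 2)) * Real.exp t :=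
    setIntegral_le_integral hint (Filter.Eventually.of_forall fun t => by positivity)
  have h2 : ∫ t : ℝ, 2 * Real.exp (-t ^ 2 / (16 * b ^ 2)) * Real.exp t
      = 2 * Real.exp (4 * b ^ 2) * Real.sqrt (Real.pi / (1 / (16 * b ^ 2))) := by
    rw [hfun, integral_const_mul]
    rw [show (fun t : ℝ => Real.exp (-(1 / (16 * b ^ 2)) * (t - 8 * b ^ 2) ^ 2))
        = fun t => (fun x => Real.exp (-(1 / (16 * b ^ 2)) * x ^ 2)) (t - 8 * b ^ 2) from rfl]
    rw [integral_sub_right_eq_self (fun x => Real.exp (-(1 / (16 * b ^ 2)) * x ^ 2)) (8 * b ^ 2)]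
    rw [integral_gaussian]
  have h3 : Real.sqrt (Real.pi / (1 / (16 * b ^ 2))) = 4 * b * Real.sqrt Real.pi := by
    rw [show Real.pi / (1 / (16 * b ^ 2)) = (4 * b) ^ 2 * Real.pi by field_simp; ring]
    rw [Real.sqrt_mul (sq_nonneg _), Real.sqrt_sq (by positivity)]
  calc ∫ t in Ioi (0:ℝ), 2 * Real.exp (-t ^ 2 / (16 * b ^ 2)) * Real.exp t
      ≤ ∫ t : ℝ, 2 * Real.exp (-t ^ 2 / (16 * b ^ 2)) * Real.exp t := h1
    _ = 2 * Real.exp (4 * b ^ 2) * (4 * b * Real.sqrt Real.pi) := by rw [h2, h3]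
    _ ≤ 8 * Real.sqrt (2 * Real.pi) * b * Real.exp (4 * b ^ 2) := by
        have hs : Real.sqrt Real.pi ≤ Real.sqrt (2 * Real.pi) :=
          Real.sqrt_le_sqrt (by linarith [Real.pi_pos])
        nlinarith [mul_le_mul_of_nonneg_left hs
          (show (0:ℝ) ≤ 8 * b * Real.exp (4 * b ^ 2) by positivity)]

open Real Set in
lemma aux_I2 {c : ℝ} (hc : 0 < c) (h32 : 32 * c ≤ 1) :
    IntegrableOn (fun t : ℝ => 2 * Real.exp (-t / (16 * c)) * Real.exp t) (Ioi 0) ∧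
    ∫ t in Ioi (0:ℝ), 2 * Real.exp (-t / (16 * c)) * Real.exp t ≤ 64 * c := by
  set r : ℝ := 1 / (16 * c) - 1 with hrdef
  have h2r : (2:ℝ) ≤ 1 / (16 * c) := by
    rw [le_div_iff₀ (by positivity)]; linarith
  have hr : 0 < r := by rw [hrdef]; linarith
  have hfun : (fun t : ℝ => 2 * Real.exp (-t / (16 * c)) * Real.exp t)
      = fun t : ℝ => 2 * Real.exp (-(r * t)) := by
    funext t; rw [mul_assoc, ← Real.exp_add]
    congr 1
    rw [hrdef]
    field_simp
    ring
  have hint : IntegrableOn (fun t : ℝ => 2 * Real.exp (-t / (16 * c)) * Real.exp t) (Ioi 0) := by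
    rw [hfun]
    have := (exp_neg_integrableOn_Ioi 0 hr).const_mul 2
    simpa [neg_mul, IntegrableOn] using this
  refine ⟨hint, ?_⟩
  have hval : ∫ t in Ioi (0:ℝ), Real.exp (-(r * t)) = 1 / r := by
    have := Real.integral_rpow_mul_exp_neg_mul_Ioi (a := 1) one_pos hr
    simpa using this
  have hcr : c * r = 1 / 16 - c := by
    rw [hrdef]; field_simp
  calc ∫ t in Ioi (0:ℝ), 2 * Real.exp (-t / (16 * c)) * Real.exp t
      = 2 * (1 / r) := by rw [hfun, integral_const_mul, hval]
    _ ≤ 64 * c := by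
        rw [mul_one_div, div_le_iff₀ hr]
        have h4 : 64 * c * r = 4 - 64 * c := by linear_combination 64 * hcr
        nlinarith

lemma exp_interval_aux (x : ℝ) : ∫ t in (0:ℝ)..x, Real.exp t = Real.exp x - 1 := by
  rw [integral_exp, Real.exp_zero]

/-- integrating a subgaussian/subexponential-type tail bound into a bound on
the moment generating function `E exp(X)`. -/
theorem stmt_8 {Ω : Type*} [MeasurableSpace Ω] (μ : Measure Ω) [IsProbabilityMeasure μ]
    (X : Ω → ℝ) (hX : Measurable X) (b c : ℝ) (hc : 0 < c) (hcb : c ≤ b)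
    (h32 : 32 * c ≤ 1)
    (htail : ∀ t : ℝ, 0 < t → μ {ω | t ≤ X ω} ≤
      ENNReal.ofReal (2 * max (Real.exp (-t ^ 2 / (16 * b ^ 2)))
        (Real.exp (-t / (16 * c))))) :
    ∫⁻ ω, ENNReal.ofReal (Real.exp (X ω)) ∂μ ≤
      ENNReal.ofReal
        (1 + 8 * Real.sqrt (2 * Real.pi) * b * Real.exp (4 * b ^ 2) + 64 * c) := by
  have hb : 0 < b := hc.trans_le hcb
  set f : Ω → ℝ := fun ω => max (X ω) 0 with hfdef
  have f_nn : ∀ ω, 0 ≤ f ω := fun ω => le_max_right _ _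
  have f_mble : Measurable f := hX.max measurable_const
  set A : ℝ → ℝ := fun t => 2 * Real.exp (-t ^ 2 / (16 * b ^ 2)) * Real.exp t with hAdef
  set B : ℝ → ℝ := fun t => 2 * Real.exp (-t / (16 * c)) * Real.exp t with hBdef
  obtain ⟨hAint, hAval⟩ := aux_I1 hb
  obtain ⟨hBint, hBval⟩ := aux_I2 hc h32
  -- Layer cake formula
  have layer : ∫⁻ ω, ENNReal.ofReal (∫ t in (0:ℝ)..f ω, Real.exp t) ∂μ
      = ∫⁻ t in Set.Ioi (0:ℝ), μ {a | t ≤ f a} * ENNReal.ofReal (Real.exp t) :=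
    lintegral_comp_eq_lintegral_meas_le_mul μ (Filter.Eventually.of_forall f_nn)
      f_mble.aemeasurable (fun t _ => Real.continuous_exp.intervalIntegrable 0 t)
      (Filter.Eventually.of_forall fun t => (Real.exp_pos t).le)
  -- Step 1 : E exp X ≤ 1 + ∫ (exp (f ω) - 1)
  have step1 : ∫⁻ ω, ENNReal.ofReal (Real.exp (X ω)) ∂μ ≤
      1 + ∫⁻ ω, ENNReal.ofReal (∫ t in (0:ℝ)..f ω, Real.exp t) ∂μ := by
    calc ∫⁻ ω, ENNReal.ofReal (Real.exp (X ω)) ∂μ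
        ≤ ∫⁻ ω, (1 + ENNReal.ofReal (∫ t in (0:ℝ)..f ω, Real.exp t)) ∂μ := by
          apply lintegral_mono
          intro ω
          dsimp only
          rw [exp_interval_aux]
          have h1 : Real.exp (X ω) ≤ 1 + (Real.exp (f ω) - 1) := by
            have := Real.exp_le_exp.mpr (le_max_left (X ω) 0 : X ω ≤ f ω)
            linarith
          have h2 : (0:ℝ) ≤ Real.exp (f ω) - 1 := by
            have : Real.exp 0 ≤ Real.exp (f ω) := Real.exp_le_exp.mpr (f_nn ω)
            rw [Real.exp_zero] at this; linarith
          calc ENNReal.ofReal (Real.exp (X ω))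
              ≤ ENNReal.ofReal (1 + (Real.exp (f ω) - 1)) := ENNReal.ofReal_le_ofReal h1
            _ = 1 + ENNReal.ofReal (Real.exp (f ω) - 1) := by
                rw [ENNReal.ofReal_add one_pos.le h2, ENNReal.ofReal_one]
      _ = 1 + ∫⁻ ω, ENNReal.ofReal (∫ t in (0:ℝ)..f ω, Real.exp t) ∂μ := by
          rw [lintegral_add_left measurable_const, lintegral_one, measure_univ]
  -- Step 2 : tail bound under the integral
  have step2 : ∫⁻ t in Set.Ioi (0:ℝ), μ {a | t ≤ f a} * ENNReal.ofReal (Real.exp t)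
      ≤ ∫⁻ t in Set.Ioi (0:ℝ), (ENNReal.ofReal (A t) + ENNReal.ofReal (B t)) := by
    have hAm : Measurable fun t => ENNReal.ofReal (A t) :=
      Measurable.ennreal_ofReal (by rw [hAdef]; fun_prop)
    have hBm : Measurable fun t => ENNReal.ofReal (B t) :=
      Measurable.ennreal_ofReal (by rw [hBdef]; fun_prop)
    refine setLIntegral_mono (hAm.add hBm) fun t ht => ?_
    have ht' : (0:ℝ) < t := ht
    have hset : {a | t ≤ f a} = {ω | t ≤ X ω} := by
      ext a
      simp only [hfdef, Set.mem_setOf_eq, le_max_iff]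
      exact or_iff_left (not_le.mpr ht')
    set e1 := Real.exp (-t ^ 2 / (16 * b ^ 2)) with he1
    set e2 := Real.exp (-t / (16 * c)) with he2
    calc μ {a | t ≤ f a} * ENNReal.ofReal (Real.exp t)
        ≤ ENNReal.ofReal (2 * max e1 e2) * ENNReal.ofReal (Real.exp t) := by
          gcongr
          rw [hset]; exact htail t ht'
      _ = ENNReal.ofReal (2 * max e1 e2 * Real.exp t) :=
          (ENNReal.ofReal_mul (by positivity)).symm
      _ ≤ ENNReal.ofReal (A t) + ENNReal.ofReal (B t) := by
          rw [← ENNReal.ofReal_add (by rw [hAdef]; positivity) (by rw [hBdef]; positivity)]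
          apply ENNReal.ofReal_le_ofReal
          have hmax : max e1 e2 ≤ e1 + e2 :=
            max_le (by nlinarith [Real.exp_pos (-t / (16 * c))])
              (by nlinarith [Real.exp_pos (-t ^ 2 / (16 * b ^ 2))])
          have het : (0:ℝ) < Real.exp t := Real.exp_pos t
          simp only [hAdef, hBdef]
          nlinarith
  -- Step 3 : convert to real integrals
  have step3 : ∫⁻ t in Set.Ioi (0:ℝ), (ENNReal.ofReal (A t) + ENNReal.ofReal (B t))
      = ENNReal.ofReal (∫ t in Set.Ioi (0:ℝ), A t) + ENNReal.ofReal (∫ t in Set.Ioi (0:ℝ), B t) := by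
    rw [lintegral_add_left (Measurable.ennreal_ofReal (show Measurable A by rw [hAdef]; fun_prop))]
    rw [← ofReal_integral_eq_lintegral_ofReal hAint.integrableOn
      (Filter.Eventually.of_forall fun t => by simp only [hAdef, Pi.zero_apply]; positivity)]
    rw [← ofReal_integral_eq_lintegral_ofReal hBint
      (Filter.Eventually.of_forall fun t => by simp only [hBdef, Pi.zero_apply]; positivity)]
  -- Assemble
  calc ∫⁻ ω, ENNReal.ofReal (Real.exp (X ω)) ∂μ
      ≤ 1 + ∫⁻ ω, ENNReal.ofReal (∫ t in (0:ℝ)..f ω, Real.exp t) ∂μ := step1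
    _ = 1 + ∫⁻ t in Set.Ioi (0:ℝ), μ {a | t ≤ f a} * ENNReal.ofReal (Real.exp t) := by rw [layer]
    _ ≤ 1 + (ENNReal.ofReal (∫ t in Set.Ioi (0:ℝ), A t)
          + ENNReal.ofReal (∫ t in Set.Ioi (0:ℝ), B t)) := by
        rw [← step3]; exact add_le_add_right step2 1
    _ ≤ 1 + (ENNReal.ofReal (8 * Real.sqrt (2 * Real.pi) * b * Real.exp (4 * b ^ 2))
          + ENNReal.ofReal (64 * c)) := by
        exact add_le_add_right (add_le_add (ENNReal.ofReal_le_ofReal hAval)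
          (ENNReal.ofReal_le_ofReal hBval)) 1
    _ = ENNReal.ofReal (1 + 8 * Real.sqrt (2 * Real.pi) * b * Real.exp (4 * b ^ 2) + 64 * c) := by
        rw [ENNReal.ofReal_add (by positivity) (by positivity),
          ENNReal.ofReal_add (by norm_num) (by positivity), ENNReal.ofReal_one]
        ring
end

section
/- Let X₁ ∈ ℝ^{n₁×p} and X₂ ∈ ℝ^{n₂×p}, set G₁ := X₁ᵀX₁ and G₂ := X₂ᵀX₂, and assume G₁ + G₂ is invertible. Define L := (G₁ + G₂)⁻¹(G₂ − G₁), X̃₁ := X₁(L + I_p) and X̃₂ := X₂(L − I_p). Let Y₁ ∈ ℝ^{n₁} and Y₂ ∈ ℝ^{n₂} be independent random vectors, each with independent N(0,1) coordinates. Then for all θ, θ′ ∈ ℝ^p, E[ exp( ⟨X̃₁(θ+θ′), Y₁⟩ + ⟨X̃₂(θ+θ′), Y₂⟩ − (‖X̃₁θ‖₂² + ‖X̃₁θ′‖₂² + ‖X̃₂θ‖₂² + ‖X̃₂θ′‖₂²)/2 ) ] = exp( 4 θᵀ G₁(G₁+G₂)⁻¹G₂ θ′ ). -/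
open Matrix MeasureTheory ProbabilityTheory
open scoped NNReal ENNReal

set_option maxHeartbeats 1000000

lemma mgf1 (t : ℝ) : ∫ x, Real.exp (t * x) ∂(gaussianReal 0 1) = Real.exp (t^2/2) := by
  rw [gaussianReal_of_var_ne_zero 0 one_ne_zero]
  have hpdf : gaussianPDF 0 1 = fun x => ((Real.toNNReal (gaussianPDFReal 0 1 x) : ℝ≥0) : ℝ≥0∞) := rfl
  rw [hpdf, integral_withDensity_eq_integral_smul
    ((measurable_gaussianPDFReal 0 1).real_toNNReal) (fun x => Real.exp (t*x))]
  have hpt : ∀ x : ℝ, (Real.toNNReal (gaussianPDFReal 0 1 x)) • Real.exp (t*x)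
      = Real.exp (t^2/2) * gaussianPDFReal t 1 x := by
    intro x
    rw [NNReal.smul_def, smul_eq_mul, Real.coe_toNNReal _ (gaussianPDFReal_nonneg _ _ _)]
    simp only [gaussianPDFReal, NNReal.coe_one, mul_one]
    rw [mul_assoc, ← Real.exp_add, mul_comm (Real.exp (t^2/2)), mul_assoc, ← Real.exp_add]
    congr 1
    ring
  simp_rw [hpt]
  rw [MeasureTheory.integral_const_mul, integral_gaussianPDFReal_eq_one t one_ne_zero, mul_one]

lemma mgfvec {n : ℕ} (a : Fin n → ℝ) :
    ∫ y : Fin n → ℝ, Real.exp (a ⬝ᵥ y) ∂(Measure.pi fun _ : Fin n => gaussianReal 0 1)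
      = Real.exp (a ⬝ᵥ a / 2) := by
  letI : MeasureSpace ℝ := ⟨gaussianReal 0 1⟩
  haveI : SigmaFinite (volume : Measure ℝ) :=
    by show SigmaFinite (gaussianReal 0 1); infer_instance
  have h1 : ∀ y : Fin n → ℝ, Real.exp (a ⬝ᵥ y) = ∏ i, Real.exp (a i * y i) := by
    intro y; rw [dotProduct, Real.exp_sum]
  simp_rw [h1]
  have h2 : ∫ y : Fin n → ℝ, ∏ i, Real.exp (a i * y i)
      = ∏ i, ∫ x : ℝ, Real.exp (a i * x) :=
    MeasureTheory.integral_fintype_prod_eq_prod (fun i x => Real.exp (a i * x))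
  have h3 : (volume : Measure (Fin n → ℝ)) = (Measure.pi fun _ : Fin n => gaussianReal 0 1) := rfl
  rw [← h3, h2]
  have h4 : ∀ i, ∫ x : ℝ, Real.exp (a i * x) = Real.exp ((a i)^2/2) := fun i => mgf1 (a i)
  simp_rw [h4, ← Real.exp_sum]
  congr 1
  rw [dotProduct]
  rw [Finset.sum_div]
  congr 1; funext i; ring

lemma dp {m p : ℕ} (A : Matrix (Fin m) (Fin p) ℝ) (x y : Fin p → ℝ) :
    (A *ᵥ x) ⬝ᵥ (A *ᵥ y) = x ⬝ᵥ ((Aᵀ * A) *ᵥ y) := by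
  rw [← Matrix.mulVec_mulVec, Matrix.dotProduct_mulVec x, Matrix.vecMul_transpose]


/-- The matrix `L = (G₁+G₂)⁻¹(G₂−G₁)` from the paper's lower-bound construction. -/
noncomputable def Lmat {n₁ n₂ p : ℕ} (X₁ : Matrix (Fin n₁) (Fin p) ℝ)
    (X₂ : Matrix (Fin n₂) (Fin p) ℝ) : Matrix (Fin p) (Fin p) ℝ :=
  (X₁ᵀ * X₁ + X₂ᵀ * X₂)⁻¹ * (X₂ᵀ * X₂ - X₁ᵀ * X₁)

/-- Gaussian second-moment (chi-square divergence) identity for the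
two-sample likelihood ratio:  with `X̃₁ = X₁(L+I)`, `X̃₂ = X₂(L−I)` and `Y₁, Y₂`
independent standard Gaussian vectors,
`E exp(⟨X̃₁(θ+θ′),Y₁⟩ + ⟨X̃₂(θ+θ′),Y₂⟩ − (‖X̃₁θ‖² + ‖X̃₁θ′‖² + ‖X̃₂θ‖² + ‖X̃₂θ′‖²)/2)
  = exp(4 θᵀ G₁(G₁+G₂)⁻¹G₂ θ′)`. -/
theorem stmt_10 {n₁ n₂ p : ℕ}
    (X₁ : Matrix (Fin n₁) (Fin p) ℝ) (X₂ : Matrix (Fin n₂) (Fin p) ℝ)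
    (hG : IsUnit (X₁ᵀ * X₁ + X₂ᵀ * X₂)) (θ θ' : Fin p → ℝ) :
    (∫ y : (Fin n₁ → ℝ) × (Fin n₂ → ℝ),
      Real.exp (
        ((X₁ * (Lmat X₁ X₂ + 1)) *ᵥ (θ + θ')) ⬝ᵥ y.1
        + ((X₂ * (Lmat X₁ X₂ - 1)) *ᵥ (θ + θ')) ⬝ᵥ y.2
        - (((X₁ * (Lmat X₁ X₂ + 1)) *ᵥ θ) ⬝ᵥ ((X₁ * (Lmat X₁ X₂ + 1)) *ᵥ θ)
          + ((X₁ * (Lmat X₁ X₂ + 1)) *ᵥ θ') ⬝ᵥ ((X₁ * (Lmat X₁ X₂ + 1)) *ᵥ θ')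
          + ((X₂ * (Lmat X₁ X₂ - 1)) *ᵥ θ) ⬝ᵥ ((X₂ * (Lmat X₁ X₂ - 1)) *ᵥ θ)
          + ((X₂ * (Lmat X₁ X₂ - 1)) *ᵥ θ') ⬝ᵥ ((X₂ * (Lmat X₁ X₂ - 1)) *ᵥ θ')) / 2)
      ∂((Measure.pi fun _ : Fin n₁ => gaussianReal 0 1).prod
          (Measure.pi fun _ : Fin n₂ => gaussianReal 0 1)))
    = Real.exp (4 * (θ ⬝ᵥ ((X₁ᵀ * X₁) * (X₁ᵀ * X₁ + X₂ᵀ * X₂)⁻¹ * (X₂ᵀ * X₂)) *ᵥ θ')) := by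
  set G₁ : Matrix (Fin p) (Fin p) ℝ := X₁ᵀ * X₁ with hG₁
  set G₂ : Matrix (Fin p) (Fin p) ℝ := X₂ᵀ * X₂ with hG₂
  set S : Matrix (Fin p) (Fin p) ℝ := G₁ + G₂ with hS
  set T : Matrix (Fin p) (Fin p) ℝ := S⁻¹ with hT
  set A : Matrix (Fin n₁) (Fin p) ℝ := X₁ * (Lmat X₁ X₂ + 1) with hA
  set B : Matrix (Fin n₂) (Fin p) ℝ := X₂ * (Lmat X₁ X₂ - 1) with hB
  clear_value G₁ G₂ S T A B
  have hdet : IsUnit S.det := S.isUnit_iff_isUnit_det.mp hG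
  have hTS : T * S = 1 := by rw [hT]; exact Matrix.nonsing_inv_mul S hdet
  have hST : S * T = 1 := by rw [hT]; exact Matrix.mul_nonsing_inv S hdet
  have hG1t : G₁ᵀ = G₁ := by rw [hG₁, Matrix.transpose_mul, Matrix.transpose_transpose]
  have hG2t : G₂ᵀ = G₂ := by rw [hG₂, Matrix.transpose_mul, Matrix.transpose_transpose]
  have hTt : Tᵀ = T := by
    rw [hT, Matrix.transpose_nonsing_inv]
    congr 1
    rw [hS, Matrix.transpose_add, hG1t, hG2t]
  have hL1 : Lmat X₁ X₂ + 1 = T * (G₂ + G₂) := by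
    rw [Lmat, ← hG₁, ← hG₂, ← hS, ← hT, ← hTS, ← Matrix.mul_add]
    congr 1
    rw [hS]; abel
  have hL2 : Lmat X₁ X₂ - 1 = T * (0 - (G₁ + G₁)) := by
    rw [Lmat, ← hG₁, ← hG₂, ← hS, ← hT, ← hTS, ← Matrix.mul_sub]
    congr 1
    rw [hS]; abel
  have key2 : G₂*(T*(G₁*(T*G₂))) + G₁*(T*(G₂*(T*G₁))) = G₁*(T*G₂) := by
    have e1 : T*G₂ = 1 - T*G₁ := by rw [← hTS, hS]; noncomm_ring
    have e2 : G₂*T = 1 - G₁*T := by rw [← hST, hS]; noncomm_ring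
    calc G₂*(T*(G₁*(T*G₂))) + G₁*(T*(G₂*(T*G₁)))
        = (G₂*T)*G₁*(T*G₂) + G₁*(T*G₂)*(T*G₁) := by noncomm_ring
      _ = (1 - G₁*T)*G₁*(1 - T*G₁) + G₁*(1 - T*G₁)*(T*G₁) := by rw [e1, e2]
      _ = G₁ - G₁*(T*G₁) := by noncomm_ring
      _ = G₁*(T*G₂) := by rw [e1]; noncomm_ring
  have hX1 : X₁ᵀ*(X₁*(T*G₂)) = G₁*(T*G₂) := by rw [← Matrix.mul_assoc, ← hG₁]
  have hX2 : X₂ᵀ*(X₂*(T*G₁)) = G₂*(T*G₁) := by rw [← Matrix.mul_assoc, ← hG₂]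
  have hN : Aᵀ * A + Bᵀ * B
      = G₁*(T*G₂) + G₁*(T*G₂) + (G₁*(T*G₂) + G₁*(T*G₂)) := by
    rw [hA, hB, Matrix.transpose_mul, Matrix.transpose_mul, hL1, hL2,
      Matrix.transpose_mul, Matrix.transpose_mul, hTt, Matrix.transpose_add, hG2t,
      Matrix.transpose_sub, Matrix.transpose_zero, Matrix.transpose_add, hG1t]
    simp only [zero_sub, Matrix.neg_mul, Matrix.mul_neg, neg_neg,
      Matrix.add_mul, Matrix.mul_add, Matrix.mul_assoc]
    rw [hX1, hX2]
    conv_rhs => rw [← key2]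
    abel
  -- the integral computation
  have split : ∀ y : (Fin n₁ → ℝ) × (Fin n₂ → ℝ),
      Real.exp ((A *ᵥ (θ + θ')) ⬝ᵥ y.1 + (B *ᵥ (θ + θ')) ⬝ᵥ y.2
        - ((A *ᵥ θ) ⬝ᵥ (A *ᵥ θ) + (A *ᵥ θ') ⬝ᵥ (A *ᵥ θ')
          + (B *ᵥ θ) ⬝ᵥ (B *ᵥ θ) + (B *ᵥ θ') ⬝ᵥ (B *ᵥ θ')) / 2)
      = (Real.exp ((A *ᵥ (θ + θ')) ⬝ᵥ y.1) * Real.exp ((B *ᵥ (θ + θ')) ⬝ᵥ y.2))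
        * Real.exp (-(((A *ᵥ θ) ⬝ᵥ (A *ᵥ θ) + (A *ᵥ θ') ⬝ᵥ (A *ᵥ θ')
          + (B *ᵥ θ) ⬝ᵥ (B *ᵥ θ) + (B *ᵥ θ') ⬝ᵥ (B *ᵥ θ')) / 2)) := by
    intro y
    rw [← Real.exp_add, ← Real.exp_add]
    exact congrArg Real.exp (by ring)
  simp_rw [split]
  rw [MeasureTheory.integral_mul_const,
    MeasureTheory.integral_prod_mul (fun y1 => Real.exp ((A *ᵥ (θ + θ')) ⬝ᵥ y1))
      (fun y2 => Real.exp ((B *ᵥ (θ + θ')) ⬝ᵥ y2)),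
    mgfvec, mgfvec, ← Real.exp_add, ← Real.exp_add]
  congr 1
  -- scalar identity
  have hx : (A *ᵥ θ) ⬝ᵥ (A *ᵥ θ') + (B *ᵥ θ) ⬝ᵥ (B *ᵥ θ')
      = 4 * (θ ⬝ᵥ (G₁ * T * G₂) *ᵥ θ') := by
    rw [dp, dp, ← dotProduct_add, ← Matrix.add_mulVec, hN,
      Matrix.mul_assoc G₁ T G₂]
    simp only [Matrix.add_mulVec, dotProduct_add]
    ring
  simp only [Matrix.mulVec_add, add_dotProduct, dotProduct_add]
  rw [dotProduct_comm (A *ᵥ θ') (A *ᵥ θ), dotProduct_comm (B *ᵥ θ') (B *ᵥ θ)]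
  linear_combination hx
end
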